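/- Let V be a vertex algebra with Li filtration F^•V. The rules ∂σ_p(a) = σ_{p+1}(∂a), σ_p(a)·σ_q(b) = σ_{p+q}(a_{(−1)}b), and {σ_p(a)_λ σ_q(b)} = Σ_{n≥0} (λ^n/n!) σ_{p+q−n}(a_{(n)}b) are well-defined on the associated graded gr_F V = ⊕_p F^pV/F^{p+1}V (where σ_p : F^pV → F^pV/F^{p+1}V is the projection) and endow gr_F V with the structure of a Poisson vertex algebra. -/
import Mathlib


/-!
STATEMENT 17 (The associated graded of the Li filtration is a Poisson
vertex algebra).

For a vertex algebra `V` with Li filtration `F^•V`, the operations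
`∂ σ_p(a) = σ_{p+1}(∂a)`, `σ_p(a)·σ_q(b) = σ_{p+q}(a_{(−1)}b)`, and
`{σ_p(a)_λ σ_q(b)} = Σ_{n≥0} (λ^n/n!) σ_{p+q−n}(a_{(n)}b)` are well defined
on `gr_F V = ⊕_p F^p V / F^{p+1} V` and make it a Poisson vertex algebra
(a commutative differential algebra with a λ-bracket satisfying
sesquilinearity, skew-symmetry, Jacobi and Leibniz identities).

All assertions are expressed below on representatives: "well defined" means
the operations send `F^p × F^q` into the right filtration piece and send
`F^{p+1} × F^q` into the next one; each Poisson-vertex-algebra axiom for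
`gr_F V` states that a certain combination of representatives lies in the
next filtration piece.
-/

/-- Binomial coefficient `binom(m, k)` with integer top argument. -/
def zbinom (m : ℤ) (k : ℕ) : ℚ :=
  (∏ i ∈ Finset.range k, ((m : ℚ) - i)) / (k.factorial : ℚ)

section helpers
variable {M : Type*} [AddCommGroup M] [Module ℂ M]

lemma finsum_mem_submodule (N : Submodule ℂ M) (f : ℕ → M) (h : ∀ i, f i ∈ N) :
    (∑ᶠ i, f i) ∈ N := by
  by_cases hf : (Function.support f).Finite
  · rw [finsum_eq_sum f hf]
    exact Submodule.sum_mem _ fun i _ => h i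
  · rw [finsum_of_infinite_support hf]; exact N.zero_mem

lemma finsum_sub_single_mem (N : Submodule ℂ M) (f : ℕ → M) (k : ℕ) (x : M)
    (hf : (Function.support f).Finite)
    (h0 : f k - x ∈ N) (h : ∀ i, i ≠ k → f i ∈ N) : (∑ᶠ i, f i) - x ∈ N := by
  have hsub : Function.support f ⊆ (insert k hf.toFinset : Finset ℕ) := by
    intro i hi; simp [Set.Finite.mem_toFinset, hi]
  rw [finsum_eq_sum_of_support_subset f hsub]
  rw [← Finset.add_sum_erase _ f (Finset.mem_insert_self k _)]
  have : f k + ∑ i ∈ (insert k hf.toFinset).erase k, f i - x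
      = (f k - x) + ∑ i ∈ (insert k hf.toFinset).erase k, f i := by abel
  rw [this]
  exact N.add_mem h0 (Submodule.sum_mem _ fun i hi => h i (Finset.ne_of_mem_erase hi))

lemma finsum_eq_zero_of (f : ℕ → M) (h : ∀ i, f i = 0) : ∑ᶠ i, f i = 0 := by
  rw [finsum_congr h]; exact finsum_zero

lemma finsum_eq_two (f : ℕ → M) (h : ∀ i, 2 ≤ i → f i = 0) :
    ∑ᶠ i, f i = f 0 + f 1 := by
  have hsub : Function.support f ⊆ (({0, 1} : Finset ℕ) : Set ℕ) := by
    intro i hi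
    rcases Nat.lt_or_ge i 2 with hi2 | hi2
    · interval_cases i <;> simp
    · exact absurd (h i hi2) hi
  rw [finsum_eq_sum_of_support_subset f hsub]
  simp

end helpers

@[simp] lemma zbinom_zero_right (m : ℤ) : zbinom m 0 = 1 := by simp [zbinom]

@[simp] lemma zbinom_one_right (m : ℤ) : zbinom m 1 = m := by simp [zbinom]

lemma zbinom_zero_left {k : ℕ} (hk : k ≠ 0) : zbinom 0 k = 0 := by
  obtain ⟨k, rfl⟩ := Nat.exists_eq_succ_of_ne_zero hk
  simp [zbinom, Finset.prod_range_succ']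

lemma zbinom_neg_one (k : ℕ) : zbinom (-1) k = (-1) ^ k := by
  have : ∏ i ∈ Finset.range k, (((-1 : ℤ) : ℚ) - i) = (-1) ^ k * k.factorial := by
    induction k with
    | zero => simp
    | succ n ih => rw [Finset.prod_range_succ, ih, Nat.factorial_succ]; push_cast; ring
  rw [zbinom, this]
  field_simp

lemma zbinom_natCast (m k : ℕ) : zbinom (m : ℤ) k = (m.choose k : ℚ) := by
  have hp : ∏ i ∈ Finset.range k, (((m : ℤ) : ℚ) - i) = (m.descFactorial k : ℚ) := by
    induction k with
    | zero => simp
    | succ n ih =>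
      rw [Finset.prod_range_succ, ih, Nat.descFactorial_succ]
      rcases Nat.lt_or_ge m n with h | h
      · rw [Nat.descFactorial_eq_zero_iff_lt.2 h] at ih ⊢
        push_cast; simp
      · push_cast [Nat.cast_sub h]; ring
  rw [zbinom, hp, Nat.descFactorial_eq_factorial_mul_choose]
  push_cast
  rw [mul_comm, mul_div_assoc, div_self (by exact_mod_cast Nat.factorial_ne_zero k), mul_one]

/-- A vertex algebra over `ℂ`: a vector space `V` with a vacuum vector and
bilinear products `op n a b = a_{(n)} b` (`n ∈ ℤ`, the coefficients of the
state-field correspondence `Y(a, z)b = Σ_n a_{(n)}b z^{-n-1}`), satisfying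
truncation, the vacuum and creation axioms, and the Borcherds identity. -/
structure VertexAlgebra (V : Type) [AddCommGroup V] [Module ℂ V] where
  /-- the `n`-th product `a_{(n)} b` -/
  op : ℤ → V →ₗ[ℂ] V →ₗ[ℂ] V
  /-- the vacuum `|0⟩` -/
  vac : V
  trunc : ∀ a b : V, ∃ N : ℤ, ∀ n : ℤ, N ≤ n → op n a b = 0
  vacuum : ∀ (n : ℤ) (a : V), op n vac a = if n = -1 then a else 0
  creation_neg : ∀ a : V, op (-1) a vac = a
  creation : ∀ n : ℤ, 0 ≤ n → ∀ a : V, op n a vac = 0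
  borcherds : ∀ (a b c : V) (p q m : ℤ),
    (∑ᶠ i : ℕ, ((zbinom m i : ℚ) : ℂ) • op (m + q - i) (op (p + i) a b) c)
      = ∑ᶠ i : ℕ, ((-1 : ℂ) ^ i * ((zbinom p i : ℚ) : ℂ)) •
          (op (m + p - i) a (op (q + i) b c)
            - ((-1 : ℂ) ^ p • op (p + q - i) b (op (m + i) a c)))

namespace VertexAlgebra

variable {V : Type} [AddCommGroup V] [Module ℂ V]

/-- The translation operator `T a = a_{(-2)} |0⟩`. -/
def T (S : VertexAlgebra V) (a : V) : V := S.op (-2) a S.vac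

/-- Iterated normally ordered monomials
`liProd [(a¹,n₁),…,(aʳ,n_r)] = a¹_{(-n₁-1)} ⋯ aʳ_{(-n_r-1)} |0⟩`. -/
def liProd (S : VertexAlgebra V) : List (V × ℕ) → V
  | [] => S.vac
  | (a, n) :: t => S.op (-(n : ℤ) - 1) a (liProd S t)

/-- The Li filtration: `F^p V` is spanned by the monomials
`a¹_{(-n₁-1)} ⋯ aʳ_{(-n_r-1)} |0⟩` with `n₁ + ⋯ + n_r ≥ p`. -/
def liF (S : VertexAlgebra V) (p : ℤ) : Submodule ℂ V :=
  Submodule.span ℂ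
    {v | ∃ L : List (V × ℕ), p ≤ ((L.map Prod.snd).sum : ℤ) ∧ v = liProd S L}

end VertexAlgebra

namespace VertexAlgebra

variable {V : Type} [AddCommGroup V] [Module ℂ V] (S : VertexAlgebra V)

/-- total weight of a monomial -/
def wt (L : List (V × ℕ)) : ℤ := ((L.map Prod.snd).sum : ℤ)

lemma liProd_mem_liF (L : List (V × ℕ)) {p : ℤ} (hp : p ≤ wt L) :
    liProd S L ∈ liF S p :=
  Submodule.subset_span ⟨L, hp, rfl⟩

lemma liF_antitone {p p' : ℤ} (h : p ≤ p') : liF S p' ≤ liF S p :=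
  Submodule.span_mono (fun v ⟨L, hL, hv⟩ => ⟨L, le_trans h hL, hv⟩)

lemma vac_mem : S.vac ∈ liF S 0 := liProd_mem_liF S [] (by simp [wt])

lemma mem_liF_nonpos {p : ℤ} (hp : p ≤ 0) (a : V) : a ∈ liF S p := by
  have : a = liProd S [(a, 0)] := by
    simp [liProd, S.creation_neg]
  rw [this]
  exact liProd_mem_liF S _ (by simp [wt]; omega)

/-- negative modes raise the filtration degree by construction -/
lemma op_neg_mem (u : V) (k : ℕ) {s : ℤ} {x : V} (hx : x ∈ liF S s) :
    S.op (-(k : ℤ) - 1) u x ∈ liF S (s + k) := by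
  induction hx using Submodule.span_induction with
  | mem v hv =>
    obtain ⟨L, hL, rfl⟩ := hv
    exact liProd_mem_liF S ((u, k) :: L) (by simp [wt, liProd] at *; omega)
  | zero => simp
  | add y z _ _ hy hz => rw [map_add]; exact Submodule.add_mem _ hy hz
  | smul c y _ hy => rw [map_smul]; exact Submodule.smul_mem _ c hy

lemma op_neg_mem' (u : V) {n : ℤ} (hn : n ≤ -1) {s : ℤ} {x : V} (hx : x ∈ liF S s) :
    S.op n u x ∈ liF S (s - n - 1) := by
  have h1 : n = -((-n - 1).toNat : ℤ) - 1 := by omega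
  have h2 : s - n - 1 = s + ((-n - 1).toNat : ℤ) := by omega
  have h := op_neg_mem S u (-n - 1).toNat hx
  rw [← h1] at h
  rwa [h2]

/-- commutator formula: Borcherds with `p = 0` -/
lemma commutator (u v c : V) (n m : ℤ) :
    S.op n u (S.op m v c) - S.op m v (S.op n u c)
      = ∑ᶠ i : ℕ, ((zbinom n i : ℚ) : ℂ) • S.op (n + m - i) (S.op i u v) c := by
  have hb := S.borcherds u v c 0 m n
  have hr : (∑ᶠ i : ℕ, ((-1 : ℂ) ^ i * ((zbinom 0 i : ℚ) : ℂ)) •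
      (S.op (n + 0 - i) u (S.op (m + i) v c)
        - ((-1 : ℂ) ^ (0 : ℤ) • S.op (0 + m - i) v (S.op (n + i) u c))))
      = S.op n u (S.op m v c) - S.op m v (S.op n u c) := by
    rw [finsum_eq_single _ 0 (fun i hi => by rw [zbinom_zero_left hi]; simp)]
    norm_num
  rw [← hr, ← hb]
  exact finsum_congr fun i => by norm_num

lemma op_nonneg_right_monomial (M : List (V × ℕ)) (u : V) (n : ℕ) :
    S.op n u (liProd S M) ∈ liF S (wt M - n) := by
  induction M generalizing u n with
  | nil =>
    have : liProd S ([] : List (V × ℕ)) = S.vac := rfl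
    rw [this, S.creation n (by positivity) u]
    exact Submodule.zero_mem _
  | cons hd tl ih =>
    obtain ⟨v, k⟩ := hd
    have hcons : liProd S ((v, k) :: tl) = S.op (-(k : ℤ) - 1) v (liProd S tl) := rfl
    have hw : wt ((v, k) :: tl) = k + wt tl := by simp [wt]
    have hcomm := S.commutator u v (liProd S tl) n (-(k : ℤ) - 1)
    rw [hcons, eq_add_of_sub_eq hcomm]
    refine Submodule.add_mem _ (finsum_mem_submodule _ _ fun i => Submodule.smul_mem _ _ ?_) ?_
    case _ i =>
      set t : ℤ := (n : ℤ) + (-(k : ℤ) - 1) - i with ht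
      by_cases htn : 0 ≤ t
      · have h3 := ih (S.op i u v) t.toNat
        rw [show ((t.toNat : ℕ) : ℤ) = t by omega] at h3
        exact liF_antitone S (by omega) h3
      · have h3 := op_neg_mem' S (S.op i u v) (show t ≤ -1 by omega)
            (liProd_mem_liF S tl (le_refl (wt tl)))
        exact liF_antitone S (by omega) h3
    case _ =>
      have h2 := op_neg_mem S v k (ih u n)
      exact liF_antitone S (by omega) h2

lemma op_nonneg_right (u : V) (n : ℕ) {q : ℤ} {b : V} (hb : b ∈ liF S q) :
    S.op n u b ∈ liF S (q - n) := by
  induction hb using Submodule.span_induction with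
  | mem v hv =>
    obtain ⟨L, hL, rfl⟩ := hv
    exact liF_antitone S (by unfold wt; omega) (op_nonneg_right_monomial S L u n)
  | zero => simp
  | add y z _ _ hy hz => rw [map_add]; exact Submodule.add_mem _ hy hz
  | smul c y _ hy => rw [map_smul]; exact Submodule.smul_mem _ c hy

lemma op_left_monomial (L : List (V × ℕ)) : ∀ (n q : ℤ) (b : V), b ∈ liF S q →
    S.op n (liProd S L) b ∈ liF S (wt L + q - n - 1) ∧
      (0 ≤ n → S.op n (liProd S L) b ∈ liF S (wt L + q - n)) := by
  induction L with
  | nil =>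
    intro n q b hb
    have : liProd S ([] : List (V × ℕ)) = S.vac := rfl
    rw [this, S.vacuum n b]
    by_cases hn : n = -1
    · subst hn
      simp only [if_pos rfl]
      constructor
      · exact liF_antitone S (by simp [wt]) hb
      · intro h; omega
    · rw [if_neg hn]
      exact ⟨Submodule.zero_mem _, fun _ => Submodule.zero_mem _⟩
  | cons hd tl ih =>
    obtain ⟨u, k⟩ := hd
    intro n q b hb
    have hcons : liProd S ((u, k) :: tl) = S.op (-(k : ℤ) - 1) u (liProd S tl) := rfl
    have hw : wt ((u, k) :: tl) = k + wt tl := by simp [wt]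
    have hbor := S.borcherds u (liProd S tl) b (-(k : ℤ) - 1) n 0
    have hL : (∑ᶠ i : ℕ, ((zbinom 0 i : ℚ) : ℂ) •
        S.op (0 + n - i) (S.op (-(k : ℤ) - 1 + i) u (liProd S tl)) b)
        = S.op n (liProd S ((u, k) :: tl)) b := by
      rw [finsum_eq_single _ 0 (fun i hi => by rw [zbinom_zero_left hi]; simp)]
      norm_num [hcons]
    have hexp := hL.symm.trans hbor
    have hterm : ∀ (extra : ℤ), 0 ≤ extra → ∀ i : ℕ,
        (S.op (0 + (-(k : ℤ) - 1) - i) u (S.op (n + i) (liProd S tl) b)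
          - ((-1 : ℂ) ^ (-(k : ℤ) - 1) •
              S.op (-(k : ℤ) - 1 + n - i) (liProd S tl) (S.op (0 + i) u b)))
          ∈ liF S (wt tl + k + q - n - 1 + extra) → True := fun _ _ _ _ => trivial
    clear hterm
    constructor
    · rw [hexp]
      refine finsum_mem_submodule _ _ fun i => Submodule.smul_mem _ _ (Submodule.sub_mem _ ?_ (Submodule.smul_mem _ _ ?_))
      · have h1 := (ih (n + i) q b hb).1
        have h2 := op_neg_mem' S u (show (0 : ℤ) + (-(k : ℤ) - 1) - i ≤ -1 by omega) h1
        exact liF_antitone S (by omega) h2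
      · have h0 : S.op (0 + (i : ℤ)) u b = S.op (i : ℕ) u b := by norm_num
        rw [h0]
        have h1 := op_nonneg_right S u i hb
        have h2 := (ih (-(k : ℤ) - 1 + n - i) (q - i) (S.op (i : ℕ) u b) h1).1
        exact liF_antitone S (by omega) h2
    · intro hn
      rw [hexp]
      refine finsum_mem_submodule _ _ fun i => Submodule.smul_mem _ _ (Submodule.sub_mem _ ?_ (Submodule.smul_mem _ _ ?_))
      · have h1 := (ih (n + i) q b hb).2 (by omega)
        have h2 := op_neg_mem' S u (show (0 : ℤ) + (-(k : ℤ) - 1) - i ≤ -1 by omega) h1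
        exact liF_antitone S (by omega) h2
      · have h0 : S.op (0 + (i : ℤ)) u b = S.op (i : ℕ) u b := by norm_num
        rw [h0]
        have h1 := op_nonneg_right S u i hb
        have h2 := (ih (-(k : ℤ) - 1 + n - i) (q - i) (S.op (i : ℕ) u b) h1).1
        exact liF_antitone S (by omega) h2

lemma op_mem (n : ℤ) {p q : ℤ} {a b : V} (ha : a ∈ liF S p) (hb : b ∈ liF S q) :
    S.op n a b ∈ liF S (p + q - n - 1) := by
  induction ha using Submodule.span_induction with
  | mem v hv =>
    obtain ⟨L, hL, rfl⟩ := hv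
    exact liF_antitone S (by unfold wt; omega) ((op_left_monomial S L n q b hb).1)
  | zero => rw [map_zero, LinearMap.zero_apply]; exact Submodule.zero_mem _
  | add y z _ _ hy hz => rw [map_add, LinearMap.add_apply]; exact Submodule.add_mem _ hy hz
  | smul c y _ hy => rw [map_smul, LinearMap.smul_apply]; exact Submodule.smul_mem _ c hy

lemma op_mem_nonneg (n : ℤ) (hn : 0 ≤ n) {p q : ℤ} {a b : V} (ha : a ∈ liF S p)
    (hb : b ∈ liF S q) : S.op n a b ∈ liF S (p + q - n) := by
  induction ha using Submodule.span_induction with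
  | mem v hv =>
    obtain ⟨L, hL, rfl⟩ := hv
    exact liF_antitone S (by unfold wt; omega) ((op_left_monomial S L n q b hb).2 hn)
  | zero => rw [map_zero, LinearMap.zero_apply]; exact Submodule.zero_mem _
  | add y z _ _ hy hz => rw [map_add, LinearMap.add_apply]; exact Submodule.add_mem _ hy hz
  | smul c y _ hy => rw [map_smul, LinearMap.smul_apply]; exact Submodule.smul_mem _ c hy

lemma T_mem {p : ℤ} {a : V} (ha : a ∈ liF S p) : S.T a ∈ liF S (p + 1) := by
  have := op_mem S (-2) ha (vac_mem S)
  rwa [show p + 0 - (-2) - 1 = p + 1 by ring] at this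

lemma T_iter_mem (j : ℕ) {p : ℤ} {a : V} (ha : a ∈ liF S p) :
    (S.T)^[j] a ∈ liF S (p + j) := by
  induction j generalizing p a with
  | zero => simpa using ha
  | succ m ihm =>
    rw [Function.iterate_succ_apply]
    have := ihm (T_mem S ha)
    rwa [show p + 1 + (m : ℤ) = p + (m + 1 : ℕ) by push_cast; ring] at this

lemma opT_eq (a b : V) (n : ℤ) :
    S.op n (S.T a) b + (n : ℂ) • S.op (n - 1) a b = 0 := by
  have hb := S.borcherds a S.vac b (-2) 0 n
  have hL : (∑ᶠ i : ℕ, ((zbinom n i : ℚ) : ℂ) • S.op (n + 0 - i) (S.op (-2 + i) a S.vac) b)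
      = S.op n (S.T a) b + (n : ℂ) • S.op (n - 1) a b := by
    rw [finsum_eq_two _ (fun i hi => by
      rw [S.creation (-2 + i) (by omega) a, map_zero, LinearMap.zero_apply, smul_zero])]
    have e0 : (-2 : ℤ) + (0 : ℕ) = -2 := by norm_num
    have e1 : (-2 : ℤ) + (1 : ℕ) = -1 := by norm_num
    have e2 : n + 0 - ((0 : ℕ) : ℤ) = n := by norm_num
    have e3 : n + 0 - ((1 : ℕ) : ℤ) = n - 1 := by norm_num
    rw [e0, e1, e2, e3, S.creation_neg a]
    push_cast
    simp [T]
  have hR : (∑ᶠ i : ℕ, ((-1 : ℂ) ^ i * ((zbinom (-2) i : ℚ) : ℂ)) •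
      (S.op (n + -2 - i) a (S.op (0 + i) S.vac b)
        - ((-1 : ℂ) ^ (-2 : ℤ) • S.op (-2 + 0 - i) S.vac (S.op (n + i) a b)))) = 0 := by
    apply finsum_eq_zero_of
    intro i
    rw [S.vacuum (0 + i) b, if_neg (by omega), S.vacuum (-2 + 0 - i), if_neg (by omega)]
    simp
  rw [hL, hR] at hb
  exact hb

lemma T_zero : S.T 0 = 0 := by
  simp [T]

lemma T_iter_zero (j : ℕ) : (S.T)^[j] (0 : V) = 0 :=
  Function.iterate_fixed (T_zero S) j

lemma op_neg_vac (b : V) (i : ℕ) :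
    S.op (-(i : ℤ) - 1) b S.vac = ((i.factorial : ℂ))⁻¹ • (S.T)^[i] b := by
  induction i generalizing b with
  | zero => simp [S.creation_neg]
  | succ m ihm =>
    have h := S.opT_eq b S.vac (-(m : ℤ) - 1)
    have h3 := eq_neg_of_add_eq_zero_left h
    have hidx : S.op (-(m : ℤ) - 1 - 1) b S.vac = S.op (-((m + 1 : ℕ) : ℤ) - 1) b S.vac := by
      congr 2
      push_cast
      ring
    rw [hidx] at h3
    have hc : (((-(m : ℤ) - 1) : ℤ) : ℂ) = -((m : ℂ) + 1) := by push_cast; ring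
    rw [hc, neg_smul, neg_neg] at h3
    have hne : ((m : ℂ) + 1) ≠ 0 := Nat.cast_add_one_ne_zero m
    have h6 : ((m : ℂ) + 1) • S.op (-((m + 1 : ℕ) : ℤ) - 1) b S.vac
        = ((m.factorial : ℂ))⁻¹ • (S.T)^[m] (S.T b) := by rw [← h3, ihm (S.T b)]
    have h7 := congrArg (fun x => ((m : ℂ) + 1)⁻¹ • x) h6
    simp only [smul_smul, inv_mul_cancel₀ hne, one_smul] at h7
    rw [h7, ← Function.iterate_succ_apply]
    congr 1
    rw [Nat.factorial_succ]
    push_cast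
    rw [mul_inv]

lemma support_finite_of_bound {M : Type*} [AddCommGroup M] (f : ℕ → M) (K : ℕ)
    (h : ∀ i, K ≤ i → f i = 0) : (Function.support f).Finite := by
  apply Set.Finite.subset (Set.finite_Iio K)
  intro i hi
  simp only [Set.mem_Iio]
  by_contra hK
  exact hi (h i (by omega))

lemma skew_eq (a b : V) (n : ℤ) :
    S.op n a b + ∑ᶠ j : ℕ, (((-1 : ℂ) ^ (n + (j : ℤ))) * ((j.factorial : ℂ)⁻¹)) •
      (S.T)^[j] (S.op (n + j) b a) = 0 := by
  have hb := S.borcherds b a S.vac n 0 (-1)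
  have hL : (∑ᶠ i : ℕ, ((zbinom (-1) i : ℚ) : ℂ) • S.op (-1 + 0 - i) (S.op (n + i) b a) S.vac)
      = ∑ᶠ j : ℕ, (((-1 : ℂ) ^ (j : ℕ)) * ((j.factorial : ℂ)⁻¹)) •
          (S.T)^[j] (S.op (n + j) b a) := by
    apply finsum_congr
    intro i
    have e : (-1 : ℤ) + 0 - i = -(i : ℤ) - 1 := by ring
    rw [e, op_neg_vac, zbinom_neg_one, smul_smul]
    norm_num
  have hR : (∑ᶠ i : ℕ, ((-1 : ℂ) ^ i * ((zbinom n i : ℚ) : ℂ)) •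
      (S.op (-1 + n - i) b (S.op (0 + i) a S.vac)
        - ((-1 : ℂ) ^ n • S.op (n + 0 - i) a (S.op (-1 + i) b S.vac))))
      = -((-1 : ℂ) ^ n • S.op n a b) := by
    rw [finsum_eq_single _ 0 (fun i hi => by
      rw [S.creation (0 + i) (by omega) a, S.creation (-1 + i) (by omega) b]
      simp)]
    rw [S.creation ((0 : ℤ) + ((0 : ℕ) : ℤ)) (by norm_num) a]
    have e1 : (-1 : ℤ) + (0 : ℕ) = -1 := by norm_num
    have e2 : n + 0 - ((0 : ℕ) : ℤ) = n := by norm_num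
    rw [e1, e2, S.creation_neg b]
    simp
  rw [hL, hR] at hb
  have hsum : (∑ᶠ j : ℕ, (((-1 : ℂ) ^ (n + (j : ℤ))) * ((j.factorial : ℂ)⁻¹)) •
      (S.T)^[j] (S.op (n + j) b a))
      = (-1 : ℂ) ^ n • ∑ᶠ j : ℕ, (((-1 : ℂ) ^ (j : ℕ)) * ((j.factorial : ℂ)⁻¹)) •
          (S.T)^[j] (S.op (n + j) b a) := by
    rw [smul_finsum]
    apply finsum_congr
    intro j
    rw [smul_smul, ← mul_assoc, zpow_add₀ (by norm_num : (-1 : ℂ) ≠ 0), zpow_natCast]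
  rw [hsum, hb, smul_neg, smul_smul, ← zpow_add₀ (by norm_num : (-1 : ℂ) ≠ 0)]
  have : (-1 : ℂ) ^ (n + n) = 1 := by
    rw [show n + n = 2 * n by ring, zpow_mul]
    norm_num
  rw [this, one_smul]
  abel

lemma Tprod_eq (a b : V) (n : ℤ) :
    S.T (S.op n a b) = S.op n a (S.T b) - (n : ℂ) • S.op (n - 1) a b := by
  have hb := S.borcherds a b S.vac n (-2) 0
  have hL : (∑ᶠ i : ℕ, ((zbinom 0 i : ℚ) : ℂ) • S.op (0 + -2 - i) (S.op (n + i) a b) S.vac)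
      = S.T (S.op n a b) := by
    rw [finsum_eq_single _ 0 (fun i hi => by rw [zbinom_zero_left hi]; simp)]
    norm_num [T]
  have hR : (∑ᶠ i : ℕ, ((-1 : ℂ) ^ i * ((zbinom n i : ℚ) : ℂ)) •
      (S.op (0 + n - i) a (S.op (-2 + i) b S.vac)
        - ((-1 : ℂ) ^ n • S.op (n + -2 - i) b (S.op (0 + i) a S.vac))))
      = S.op n a (S.T b) - (n : ℂ) • S.op (n - 1) a b := by
    rw [finsum_eq_two _ (fun i hi => by
      rw [S.creation (-2 + i) (by omega) b, S.creation (0 + i) (by omega) a]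
      simp)]
    rw [S.creation ((0 : ℤ) + ((0 : ℕ) : ℤ)) (by norm_num) a, S.creation ((0 : ℤ) + ((1 : ℕ) : ℤ)) (by norm_num) a]
    have e0 : (-2 : ℤ) + (0 : ℕ) = -2 := by norm_num
    have e1 : (-2 : ℤ) + (1 : ℕ) = -1 := by norm_num
    have e2 : (0 : ℤ) + n - ((0 : ℕ) : ℤ) = n := by norm_num
    have e3 : (0 : ℤ) + n - ((1 : ℕ) : ℤ) = n - 1 := by norm_num
    rw [e0, e1, e2, e3, S.creation_neg b]
    push_cast
    simp only [map_zero, LinearMap.map_zero, smul_zero, sub_zero, pow_zero, pow_one,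
      Rat.cast_one, one_mul, one_smul]
    rw [neg_one_mul, neg_smul]
    norm_num [T, sub_eq_add_neg]
  rw [hL, hR] at hb
  exact hb

end VertexAlgebra

set_option maxHeartbeats 2000000 in
open VertexAlgebra in
theorem stmt_17 {V : Type} [AddCommGroup V] [Module ℂ V] (S : VertexAlgebra V)
    (p q r : ℤ) (hp : 0 ≤ p) (hq : 0 ≤ q) (hr : 0 ≤ r)
    (a b c : V) (ha : a ∈ liF S p) (hb : b ∈ liF S q) (hc : c ∈ liF S r) :
    -- (well-definedness) the operations land in the right filtration pieces:
    (S.op (-1) a b ∈ liF S (p + q)) ∧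
    (S.T a ∈ liF S (p + 1)) ∧
    (∀ n : ℕ, S.op n a b ∈ liF S (p + q - n)) ∧
    -- (well-definedness) they are independent of the representatives:
    (∀ a', a' ∈ liF S (p + 1) →
      S.op (-1) a' b ∈ liF S (p + q + 1) ∧ S.T a' ∈ liF S (p + 2) ∧
        ∀ n : ℕ, S.op n a' b ∈ liF S (p + q - n + 1)) ∧
    (∀ b', b' ∈ liF S (q + 1) →
      S.op (-1) a b' ∈ liF S (p + q + 1) ∧
        ∀ n : ℕ, S.op n a b' ∈ liF S (p + q - n + 1)) ∧
    -- commutativity of the product of `gr_F V`: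
    (S.op (-1) a b - S.op (-1) b a ∈ liF S (p + q + 1)) ∧
    -- associativity of the product of `gr_F V`:
    (S.op (-1) (S.op (-1) a b) c - S.op (-1) a (S.op (-1) b c)
      ∈ liF S (p + q + r + 1)) ∧
    -- `∂` is a derivation of the product:
    (S.T (S.op (-1) a b) - S.op (-1) (S.T a) b - S.op (-1) a (S.T b)
      ∈ liF S (p + q + 2)) ∧
    -- sesquilinearity `{∂a_λ b} = −λ{a_λ b}` (in coefficients:
    -- `(∂a)_{(n)} = −n a_{(n−1)}` on `gr`):
    (∀ n : ℕ, S.op n (S.T a) b + (n : ℂ) • S.op ((n : ℤ) - 1) a b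
      ∈ liF S (p + q - n + 2)) ∧
    -- skew-symmetry `{a_λ b} = −{b_{−λ−∂} a}` (in coefficients):
    (∀ n : ℕ, S.op n a b
        + ∑ᶠ j : ℕ, ((-1 : ℂ) ^ (n + j) * ((j.factorial : ℂ)⁻¹)) •
            (S.T)^[j] (S.op (n + j) b a)
      ∈ liF S (p + q - n + 1)) ∧
    -- Jacobi identity (in coefficients):
    (∀ m n : ℕ, S.op m a (S.op n b c) - S.op n b (S.op m a c)
        - ∑ᶠ j : ℕ, ((m.choose j : ℂ)) • S.op (m + n - j) (S.op j a b) c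
      ∈ liF S (p + q + r - m - n + 1)) ∧
    -- Leibniz rule `{a_λ bc} = {a_λ b}c + b{a_λ c}` (in coefficients):
    (∀ n : ℕ, S.op n a (S.op (-1) b c) - S.op (-1) (S.op n a b) c
        - S.op (-1) b (S.op n a c)
      ∈ liF S (p + q + r - n + 1)) := by
  refine ⟨?_, T_mem S ha, ?_, ?_, ?_, ?_, ?_, ?_, ?_, ?_, ?_, ?_⟩
  · -- product well-defined
    have := op_mem S (-1) ha hb
    rwa [show p + q - (-1) - 1 = p + q by ring] at this
  · -- n-th products
    intro n
    exact op_mem_nonneg S n (by positivity) ha hb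
  · -- independence in a
    intro a' ha'
    refine ⟨?_, ?_, fun n => ?_⟩
    · have := op_mem S (-1) ha' hb
      rwa [show p + 1 + q - (-1) - 1 = p + q + 1 by ring] at this
    · have := T_mem S ha'
      rwa [show p + 1 + 1 = p + 2 by ring] at this
    · have := op_mem_nonneg S n (by positivity) ha' hb
      rwa [show p + 1 + q - (n : ℤ) = p + q - n + 1 by ring] at this
  · -- independence in b
    intro b' hb'
    refine ⟨?_, fun n => ?_⟩
    · have := op_mem S (-1) ha hb'
      rwa [show p + (q + 1) - (-1) - 1 = p + q + 1 by ring] at this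
    · have := op_mem_nonneg S n (by positivity) ha hb'
      rwa [show p + (q + 1) - (n : ℤ) = p + q - n + 1 by ring] at this
  · -- commutativity
    have hskew := S.skew_eq a b (-1)
    have hA : S.op (-1) a b = ∑ᶠ j : ℕ,
        -((((-1 : ℂ) ^ ((-1 : ℤ) + (j : ℤ))) * ((j.factorial : ℂ)⁻¹)) •
          (S.T)^[j] (S.op (-1 + j) b a)) := by
      rw [finsum_neg_distrib]
      exact eq_neg_of_add_eq_zero_left hskew
    rw [hA]
    obtain ⟨N, hN⟩ := S.trunc b a
    refine finsum_sub_single_mem _ _ 0 _ ?_ ?_ ?_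
    · apply support_finite_of_bound _ (N + 1).toNat
      intro i hi
      rw [hN (-1 + i) (by omega), T_iter_zero]
      simp
    · have h0 : -((((-1 : ℂ) ^ ((-1 : ℤ) + ((0 : ℕ) : ℤ))) * (((0 : ℕ).factorial : ℂ)⁻¹)) •
          (S.T)^[0] (S.op (-1 + ((0 : ℕ) : ℤ)) b a)) - S.op (-1) b a = 0 := by
        norm_num
      rw [h0]
      exact Submodule.zero_mem _
    · intro i hi
      refine Submodule.neg_mem _ (Submodule.smul_mem _ _ ?_)
      have h1 := op_mem_nonneg S (-1 + i) (by omega) hb ha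
      have h2 := T_iter_mem S i h1
      rwa [show q + p - (-1 + (i : ℤ)) + i = p + q + 1 by ring] at h2
  · -- associativity
    have hbor := S.borcherds a b c (-1) (-1) 0
    have hL : (∑ᶠ i : ℕ, ((zbinom 0 i : ℚ) : ℂ) •
        S.op (0 + -1 - i) (S.op (-1 + i) a b) c) = S.op (-1) (S.op (-1) a b) c := by
      rw [finsum_eq_single _ 0 (fun i hi => by rw [zbinom_zero_left hi]; simp)]
      norm_num
    have hexp := hL.symm.trans hbor
    rw [hexp]
    obtain ⟨N1, hN1⟩ := S.trunc b c
    obtain ⟨N2, hN2⟩ := S.trunc a c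
    refine finsum_sub_single_mem _ _ 0 _ ?_ ?_ ?_
    · apply support_finite_of_bound _ ((max N1 N2) + 1).toNat
      intro i hi
      rw [hN1 (-1 + i) (by omega), hN2 (0 + i) (by omega)]
      simp
    · have h0 : ((-1 : ℂ) ^ (0 : ℕ) * ((zbinom (-1) (0 : ℕ) : ℚ) : ℂ)) •
          (S.op (0 + -1 - ((0 : ℕ) : ℤ)) a (S.op (-1 + ((0 : ℕ) : ℤ)) b c)
            - ((-1 : ℂ) ^ (-1 : ℤ) • S.op (-1 + -1 - ((0 : ℕ) : ℤ)) b (S.op (0 + ((0 : ℕ) : ℤ)) a c)))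
          - S.op (-1) a (S.op (-1) b c) = S.op (-2) b (S.op 0 a c) := by
        rw [zbinom_neg_one]
        norm_num
      rw [h0]
      have h1 := op_mem_nonneg S 0 le_rfl ha hc
      have h2 := op_mem S (-2) hb h1
      rwa [show q + (p + r - 0) - (-2) - 1 = p + q + r + 1 by ring] at h2
    · intro i hi
      refine Submodule.smul_mem _ _ (Submodule.sub_mem _ ?_ (Submodule.smul_mem _ _ ?_))
      · have h1 := op_mem_nonneg S (-1 + i) (by omega) hb hc
        have h2 := op_mem S (0 + -1 - i) ha h1
        rwa [show p + (q + r - (-1 + (i : ℤ))) - (0 + -1 - (i : ℤ)) - 1 = p + q + r + 1 by ring] at h2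
      · have h1 := op_mem_nonneg S (0 + i) (by positivity) ha hc
        have h2 := op_mem S (-1 + -1 - i) hb h1
        rwa [show q + (p + r - (0 + (i : ℤ))) - (-1 + -1 - (i : ℤ)) - 1 = p + q + r + 1 by ring] at h2
  · -- derivation
    have h1 := S.Tprod_eq a b (-1)
    have h2 := S.opT_eq a b (-1)
    norm_num at h1 h2
    have h2' : S.op (-1) (S.T a) b = S.op (-2) a b := by
      have h3 := eq_neg_of_add_eq_zero_left h2
      rwa [neg_neg] at h3
    have hz : S.T (S.op (-1) a b) - S.op (-1) (S.T a) b - S.op (-1) a (S.T b) = 0 := by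
      rw [h1, h2']
      abel
    rw [hz]
    exact Submodule.zero_mem _
  · -- sesquilinearity
    intro n
    have h := S.opT_eq a b (n : ℤ)
    rw [show (((n : ℤ) : ℂ)) = ((n : ℕ) : ℂ) by push_cast; ring] at h
    rw [h]
    exact Submodule.zero_mem _
  · -- skew-symmetry
    intro n
    have h := S.skew_eq a b (n : ℤ)
    have hx : (∑ᶠ j : ℕ, ((-1 : ℂ) ^ (n + j) * ((j.factorial : ℂ)⁻¹)) •
          (S.T)^[j] (S.op (n + j) b a))
        = ∑ᶠ j : ℕ, (((-1 : ℂ) ^ ((n : ℤ) + (j : ℤ))) * ((j.factorial : ℂ)⁻¹)) •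
          (S.T)^[j] (S.op ((n : ℤ) + j) b a) := by
      refine finsum_congr fun j => ?_
      rw [show ((n : ℤ) + (j : ℤ)) = ((n + j : ℕ) : ℤ) by push_cast; ring, zpow_natCast]
    rw [hx, h]
    exact Submodule.zero_mem _
  · -- Jacobi
    intro m n
    have hcomm := S.commutator a b c (m : ℤ) (n : ℤ)
    have hz : (∑ᶠ j : ℕ, ((m.choose j : ℂ)) • S.op ((m : ℤ) + n - j) (S.op j a b) c)
        = ∑ᶠ i : ℕ, ((zbinom (m : ℤ) i : ℚ) : ℂ) • S.op ((m : ℤ) + n - i) (S.op i a b) c := by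
      refine finsum_congr fun j => ?_
      rw [zbinom_natCast]
      norm_num
    rw [hz, ← hcomm]
    rw [sub_self]
    exact Submodule.zero_mem _
  · -- Leibniz
    intro n
    have hcomm := S.commutator a b c (n : ℤ) (-1)
    have hE : S.op n a (S.op (-1) b c) - S.op (-1) (S.op n a b) c - S.op (-1) b (S.op n a c)
        = (∑ᶠ i : ℕ, ((zbinom (n : ℤ) i : ℚ) : ℂ) • S.op ((n : ℤ) + -1 - i) (S.op i a b) c)
          - S.op (-1) (S.op n a b) c := by
      rw [← hcomm]
      abel
    rw [hE]
    obtain ⟨N, hN⟩ := S.trunc a b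
    refine finsum_sub_single_mem _ _ n _ ?_ ?_ ?_
    · apply support_finite_of_bound _ N.toNat
      intro i hi
      rw [hN i (by omega)]
      simp
    · have h0 : ((zbinom (n : ℤ) n : ℚ) : ℂ) • S.op ((n : ℤ) + -1 - n) (S.op n a b) c
          - S.op (-1) (S.op n a b) c = 0 := by
        rw [zbinom_natCast, Nat.choose_self, show ((n : ℤ) + -1 - n) = -1 by ring]
        norm_num
      rw [h0]
      exact Submodule.zero_mem _
    · intro i hi
      rcases Nat.lt_or_ge i n with hlt | hge
      · refine Submodule.smul_mem _ _ ?_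
        have h1 := op_mem_nonneg S i (by positivity) ha hb
        have h2 := op_mem_nonneg S ((n : ℤ) + -1 - i) (by omega) h1 hc
        rwa [show p + q - (i : ℤ) + r - ((n : ℤ) + -1 - i) = p + q + r - n + 1 by ring] at h2
      · have hgt : n < i := by omega
        rw [zbinom_natCast, Nat.choose_eq_zero_of_lt hgt]
        norm_num
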